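/- arXiv:1603.07378 — 2 statements merged into one kernel-verified Lean document; each statement's English description precedes it below -/
import Mathlib

section
/- Let μ be a probability measure on a measurable space M, let f ≥ 0 be μ-integrable, let F be a measurable set, and suppose ∫_M f dμ = 1. Then ∫_F f log f dμ ≤ ∫_M f log f dμ + ∫_F (f - 1) dμ, provided f log f is μ-integrable. -/
open MeasureTheory

/-- Entropy restriction inequality: for a probability measure `μ`, a probability density
`f ≥ 0` with `f log f` integrable, and a measurable set `F`,
`∫_F f log f dμ ≤ ∫ f log f dμ + ∫_F (f - 1) dμ`. -/
theorem setIntegral_entropy_le {M : Type*} [MeasurableSpace M] (μ : Measure M)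
    [IsProbabilityMeasure μ] (f : M → ℝ) (F : Set M) (hF : MeasurableSet F)
    (hfm : Measurable f) (hf0 : 0 ≤ f) (hfi : Integrable f μ)
    (hf1 : ∫ x, f x ∂μ = 1)
    (hent : Integrable (fun x => f x * Real.log (f x)) μ) :
    ∫ x in F, f x * Real.log (f x) ∂μ ≤
      (∫ x, f x * Real.log (f x) ∂μ) + ∫ x in F, (f x - 1) ∂μ := by
  have key : ∀ x : ℝ, 0 ≤ x → x - 1 ≤ x * Real.log x := by
    intro x hx
    rcases eq_or_lt_of_le hx with h | h
    · simp [← h]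
    · have h2 := Real.log_le_sub_one_of_pos (show (0:ℝ) < x⁻¹ by positivity)
      rw [Real.log_inv] at h2
      have hx' : x ≠ 0 := ne_of_gt h
      have : x * (-Real.log x) ≤ x * (x⁻¹ - 1) := by
        exact mul_le_mul_of_nonneg_left h2 (le_of_lt h)
      rw [mul_sub, mul_inv_cancel₀ hx'] at this
      nlinarith
  have hg : Integrable (fun x => f x - 1) μ := hfi.sub (integrable_const 1)
  have h1 : ∫ x in F, (f x - 1) ∂μ + ∫ x in Fᶜ, (f x - 1) ∂μ = 0 := by
    rw [integral_add_compl hF hg, integral_sub hfi (integrable_const 1)]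
    simp [hf1]
  have h2 : ∫ x in F, f x * Real.log (f x) ∂μ + ∫ x in Fᶜ, f x * Real.log (f x) ∂μ
      = ∫ x, f x * Real.log (f x) ∂μ := integral_add_compl hF hent
  have h3 : ∫ x in Fᶜ, (f x - 1) ∂μ ≤ ∫ x in Fᶜ, f x * Real.log (f x) ∂μ :=
    integral_mono hg.restrict hent.restrict (fun x => key (f x) (hf0 x))
  linarith
end

section
/- Let a > 1, α > 0, p ≥ 1, and let C = C(a,α) be the constant from the sup-domination lemma. Let (M,d) be a metric space, {F_k} Borel subsets of M, I = [k₀, k₁] a finite interval of nonnegative integers, μ a probability measure, f ≥ 0 a probability density w.r.t. μ, and ε > 0. Set φ = ∑_{k∈I} (1+k)^α a^k 𝟙_{F_k} and ψ_ε(x) = ∑_{k∈I} sup_{y: d(x,y)^p ≤ Cε(1+k)^α a^k} (1+k)^α a^k 𝟙_{F_k}(y). Then ∫ φ f dμ ≤ (1/ε) W_p^p(fμ, μ) + C ∫ ψ_ε dμ. -/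
open MeasureTheory Finset

attribute [local instance] Classical.propDecidable

/-- `W_p^p(μ, ν)`: the `p`-th power of the Kantorovich distance of order `p`, as an
infimum over couplings of the `p`-th moment of the distance. -/
noncomputable def wassersteinPow {M : Type*} [MeasurableSpace M] [PseudoMetricSpace M]
    (p : ℝ) (μ ν : Measure M) : ENNReal :=
  ⨅ σ ∈ {σ : Measure (M × M) | σ.map Prod.fst = μ ∧ σ.map Prod.snd = ν},
    ∫⁻ z, ENNReal.ofReal (dist z.1 z.2 ^ p) ∂σ

/-!
The weights `c k = (1 + k)^α a^k` grow geometrically, so any partial sum of them is at most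
`C = a / (a - 1)` times its largest term. Fix `x, y` and let `m` be the largest `k ∈ I` with
`y ∈ F_k`. Either `d(x, y)^p ≤ C ε c m`, and then `y` witnesses that the `m`-th supremum in
`ψ_ε(x)` is `c m`, so `φ(y) ≤ C c m ≤ C ψ_ε(x)`; or `φ(y) ≤ C c m < ε⁻¹ d(x, y)^p`. Hence
`φ(y) ≤ ε⁻¹ d(x, y)^p + C ψ_ε(x)` for all `x, y`, and integrating this against any coupling of
`fμ` and `μ` gives the claim.
-/

open scoped ENNReal

lemma sum_Iic_rpow_mul_pow_le {a α : ℝ} (ha : 1 < a) (hα : 0 ≤ α) (m : ℕ) :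
    ∑ k ∈ Iic m, (1 + (k : ℝ)) ^ α * a ^ k ≤ a / (a - 1) * ((1 + (m : ℝ)) ^ α * a ^ m) := by
  have ha1 : 0 < a - 1 := by linarith
  calc ∑ k ∈ Iic m, (1 + (k : ℝ)) ^ α * a ^ k
      ≤ ∑ k ∈ range (m + 1), (1 + (m : ℝ)) ^ α * a ^ k := by
        rw [← Nat.range_succ_eq_Iic]
        refine sum_le_sum fun k hk => ?_
        have hkm : (k : ℝ) ≤ m := by exact_mod_cast Nat.lt_succ_iff.mp (mem_range.mp hk)
        gcongr
    _ = (1 + (m : ℝ)) ^ α * ((a ^ (m + 1) - 1) / (a - 1)) := by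
        rw [← mul_sum, geom_sum_eq ha.ne']
    _ ≤ (1 + (m : ℝ)) ^ α * (a ^ (m + 1) / (a - 1)) := by
        gcongr
        linarith
    _ = a / (a - 1) * ((1 + (m : ℝ)) ^ α * a ^ m) := by
        rw [pow_succ]
        ring

section IteSup

variable {ι : Type*} {P : ι → Prop} [DecidablePred P] {r : ℝ}

lemma le_ciSup_ite (hr : 0 ≤ r) {y : ι} (hy : P y) :
    r ≤ ⨆ z, if P z then r else 0 := by
  refine (if_pos hy).symm.le.trans (le_ciSup (f := fun z => if P z then r else 0) ⟨r, ?_⟩ y)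
  rintro _ ⟨z, rfl⟩
  dsimp only
  split_ifs <;> simp [hr]

lemma ciSup_ite_nonneg (hr : 0 ≤ r) : 0 ≤ ⨆ z, if P z then r else 0 :=
  Real.iSup_nonneg fun z => by split_ifs <;> simp [hr]

end IteSup

section Pointwise

variable {M : Type*} [PseudoMetricSpace M] {c : ℕ → ℝ} {C ε p : ℝ}

/-- The inf-convolution bound `Q_ε φ ≤ C ψ_ε`. -/
lemma sum_mul_indicator_le (hc0 : ∀ k, 0 ≤ c k) (hC0 : 0 ≤ C)
    (hC : ∀ m, ∑ k ∈ Iic m, c k ≤ C * c m) (hε : 0 < ε) (F : ℕ → Set M) (s : Finset ℕ)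
    (x y : M) :
    ∑ k ∈ s, c k * (F k).indicator (fun _ => (1 : ℝ)) y ≤
      ε⁻¹ * dist x y ^ p +
        C * ∑ k ∈ s, ⨆ z, if dist x z ^ p ≤ C * ε * c k ∧ z ∈ F k then c k else 0 := by
  set ψ := ∑ k ∈ s, ⨆ z, if dist x z ^ p ≤ C * ε * c k ∧ z ∈ F k then c k else 0
  have hψ0 : 0 ≤ C * ψ := mul_nonneg hC0 (sum_nonneg fun k _ => ciSup_ite_nonneg (hc0 k))
  have hcost0 : 0 ≤ ε⁻¹ * dist x y ^ p := by positivity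
  set S := s.filter (y ∈ F ·)
  have hφ : ∑ k ∈ s, c k * (F k).indicator (fun _ => (1 : ℝ)) y = ∑ k ∈ S, c k := by
    rw [sum_filter]
    refine sum_congr rfl fun k _ => ?_
    by_cases hy : y ∈ F k <;> simp [hy]
  rw [hφ]
  rcases S.eq_empty_or_nonempty with hS | hS
  · rw [hS, sum_empty]
    linarith
  set m := S.max' hS
  obtain ⟨hms, hym⟩ := mem_filter.mp (S.max'_mem hS)
  have hSm : ∑ k ∈ S, c k ≤ C * c m :=
    (sum_le_sum_of_subset_of_nonneg (fun k hk => mem_Iic.mpr (S.le_max' k hk))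
      fun k _ _ => hc0 k).trans (hC m)
  by_cases hxy : dist x y ^ p ≤ C * ε * c m
  · have hmψ : c m ≤ ψ :=
      (le_ciSup_ite (hc0 m) (P := fun z => dist x z ^ p ≤ C * ε * c m ∧ z ∈ F m)
        ⟨hxy, hym⟩).trans
        (single_le_sum (f := fun k => ⨆ z, if dist x z ^ p ≤ C * ε * c k ∧ z ∈ F k
          then c k else 0) (fun k _ => ciSup_ite_nonneg (hc0 k)) hms)
    calc ∑ k ∈ S, c k ≤ C * c m := hSm
      _ ≤ C * ψ := by gcongr
      _ ≤ _ := by linarith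
  · calc ∑ k ∈ S, c k ≤ C * c m := hSm
      _ = ε⁻¹ * (C * ε * c m) := by field_simp
      _ ≤ ε⁻¹ * dist x y ^ p := by gcongr; linarith
      _ ≤ _ := by linarith

end Pointwise

section Transport

variable {M : Type*} [MeasurableSpace M] [PseudoMetricSpace M] {p : ℝ} {ν μ : Measure M}

lemma lintegral_le_lintegral_add_mul_wassersteinPow {g h : M → ℝ≥0∞} (hg : Measurable g)
    (hh : Measurable h) {c : ℝ≥0∞} (hc0 : c ≠ 0) (hc : c ≠ ⊤)
    (hgh : ∀ x y, g y ≤ h x + c * ENNReal.ofReal (dist x y ^ p)) :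
    ∫⁻ y, g y ∂ν ≤ ∫⁻ x, h x ∂μ + c * wassersteinPow p ν μ := by
  simp only [wassersteinPow, ENNReal.mul_iInf_of_ne hc0 hc, ENNReal.add_iInf]
  refine le_iInf₂ fun σ ⟨hσν, hσμ⟩ => ?_
  calc ∫⁻ y, g y ∂ν = ∫⁻ z, g z.1 ∂σ := by rw [← hσν, lintegral_map hg measurable_fst]
    _ ≤ ∫⁻ z, h z.2 + c * ENNReal.ofReal (dist z.1 z.2 ^ p) ∂σ :=
        lintegral_mono fun z => dist_comm z.1 z.2 ▸ hgh z.2 z.1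
    _ = ∫⁻ x, h x ∂μ + c * ∫⁻ z, ENNReal.ofReal (dist z.1 z.2 ^ p) ∂σ := by
        rw [lintegral_add_left (by fun_prop : Measurable fun z : M × M => h z.2),
          lintegral_const_mul' _ _ hc, ← hσμ, lintegral_map hh measurable_snd]

lemma integral_le_integral_add_wassersteinPow {φ ψ : M → ℝ} {ε : ℝ} (hφ : Measurable φ)
    (hφ0 : 0 ≤ φ) (hψ : Measurable ψ) (hψ0 : 0 ≤ ψ) (hψi : Integrable ψ μ) (hε : 0 < ε)
    (hW : wassersteinPow p ν μ ≠ ⊤) (hφψ : ∀ x y, φ y ≤ ψ x + ε⁻¹ * dist x y ^ p) :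
    ∫ y, φ y ∂ν ≤ ∫ x, ψ x ∂μ + ε⁻¹ * (wassersteinPow p ν μ).toReal := by
  have hlin : ∫⁻ y, ENNReal.ofReal (φ y) ∂ν ≤
      ∫⁻ x, ENNReal.ofReal (ψ x) ∂μ + ENNReal.ofReal ε⁻¹ * wassersteinPow p ν μ := by
    refine lintegral_le_lintegral_add_mul_wassersteinPow (by fun_prop) (by fun_prop)
      (by simpa using hε) ENNReal.ofReal_ne_top fun x y => ?_
    rw [← ENNReal.ofReal_mul (by positivity)]
    exact (ENNReal.ofReal_le_ofReal (hφψ x y)).trans ENNReal.ofReal_add_le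
  have hψfin : ∫⁻ x, ENNReal.ofReal (ψ x) ∂μ ≠ ⊤ :=
    (lintegral_ofReal_ne_top_iff_integrable hψ.aestronglyMeasurable (ae_of_all _ hψ0)).mpr hψi
  rw [integral_eq_lintegral_of_nonneg_ae (ae_of_all _ hφ0) hφ.aestronglyMeasurable,
    integral_eq_lintegral_of_nonneg_ae (ae_of_all _ hψ0) hψ.aestronglyMeasurable]
  refine (ENNReal.toReal_mono (by finiteness) hlin).trans_eq ?_
  rw [ENNReal.toReal_add hψfin (by finiteness), ENNReal.toReal_mul,
    ENNReal.toReal_ofReal (by positivity)]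

end Transport

lemma integral_withDensity_ofReal_eq_integral_mul {M : Type*} [MeasurableSpace M]
    {μ : Measure M} {f : M → ℝ} (hf : Measurable f) (hf0 : 0 ≤ f) (g : M → ℝ) :
    ∫ x, g x ∂μ.withDensity (fun x => ENNReal.ofReal (f x)) = ∫ x, g x * f x ∂μ := by
  rw [integral_withDensity_eq_integral_toReal_smul (by fun_prop)
    (ae_of_all _ fun _ => ENNReal.ofReal_lt_top)]
  simp only [ENNReal.toReal_ofReal (hf0 _), smul_eq_mul, mul_comm]

theorem kantorovich_sum_indicator_bound_general (a α p : ℝ) (ha : 1 < a) (hα : 0 < α) :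
    ∃ C : ℝ, 0 < C ∧
      ∀ (M : Type*) [MeasurableSpace M] [PseudoMetricSpace M] (μ : Measure M),
        IsProbabilityMeasure μ →
        ∀ (F : ℕ → Set M), (∀ k, MeasurableSet (F k)) →
        ∀ (k₀ k₁ : ℕ) (f : M → ℝ), Measurable f → 0 ≤ f → Integrable f μ →
          (∫ x, f x ∂μ) = 1 →
        ∀ ε : ℝ, 0 < ε →
        wassersteinPow p (μ.withDensity fun x => ENNReal.ofReal (f x)) μ < ⊤ →
        ∀ ψ : M → ℝ,
          ψ = (fun x => ∑ k ∈ Finset.Icc k₀ k₁, ⨆ y : M,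
            (if dist x y ^ p ≤ C * ε * (1 + (k : ℝ)) ^ α * a ^ k ∧ y ∈ F k
              then (1 + (k : ℝ)) ^ α * a ^ k else 0)) →
          Measurable ψ → Integrable ψ μ →
        ∫ x, (∑ k ∈ Finset.Icc k₀ k₁,
            (1 + (k : ℝ)) ^ α * a ^ k * Set.indicator (F k) (fun _ => (1 : ℝ)) x) * f x ∂μ ≤
          (1 / ε) * (wassersteinPow p (μ.withDensity fun x => ENNReal.ofReal (f x)) μ).toReal +
            C * ∫ x, ψ x ∂μ := by
  have hC : 0 < a / (a - 1) := div_pos (by linarith) (by linarith)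
  refine ⟨a / (a - 1), hC, ?_⟩
  intro M _ _ μ _ F hF k₀ k₁ f hfm hf0 _ _ ε hε hW ψ hψ hψm hψi
  set φ : M → ℝ := fun y =>
    ∑ k ∈ Icc k₀ k₁, (1 + (k : ℝ)) ^ α * a ^ k * (F k).indicator (fun _ => 1) y
  have hφ : Measurable φ :=
    Finset.measurable_sum _ fun k _ => (measurable_const.indicator (hF k)).const_mul _
  have hφ0 : 0 ≤ φ := fun y =>
    sum_nonneg fun k _ => mul_nonneg (by positivity) (Set.indicator_nonneg (by simp) y)
  have hψ0 : 0 ≤ ψ := fun x => hψ ▸ sum_nonneg fun k _ => ciSup_ite_nonneg (by positivity)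
  have hφψ : ∀ x y, φ y ≤ a / (a - 1) * ψ x + ε⁻¹ * dist x y ^ p := by
    intro x y
    have := sum_mul_indicator_le (p := p) (fun k => by positivity) hC.le
      (sum_Iic_rpow_mul_pow_le ha hα.le) hε F (Icc k₀ k₁) x y
    subst hψ
    simpa only [φ, mul_assoc, add_comm] using this
  rw [← integral_withDensity_ofReal_eq_integral_mul hfm hf0, ← integral_const_mul, one_div]
  exact (integral_le_integral_add_wassersteinPow hφ hφ0 (hψm.const_mul _)
    (fun x => mul_nonneg hC.le (hψ0 x)) (hψi.const_mul _) hε hW.ne hφψ).trans_eq (add_comm _ _)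

/-- Lemma 2 of the paper: for `a > 1`, `α > 0`, `p ≥ 1` there is `C = C(a, α)` such that for
any Borel sets `F_k`, any interval `I = [k₀,k₁]` of nonnegative integers, any probability
density `f` w.r.t. `μ` and any `ε > 0`,
`∫ φ f dμ ≤ ε⁻¹ W_p^p(fμ, μ) + C ∫ ψ_ε dμ`, where
`φ = ∑_{k∈I} (1+k)^α a^k 𝟙_{F_k}` and
`ψ_ε(x) = ∑_{k∈I} sup_{y : d(x,y)^p ≤ Cε(1+k)^α a^k} (1+k)^α a^k 𝟙_{F_k}(y)`. -/
theorem kantorovich_sum_indicator_bound (a α p : ℝ) (ha : 1 < a) (hα : 0 < α) (hp : 1 ≤ p) :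
    ∃ C : ℝ, 0 < C ∧
      ∀ (M : Type*) [MeasurableSpace M] [PseudoMetricSpace M] (μ : Measure M),
        IsProbabilityMeasure μ →
        ∀ (F : ℕ → Set M), (∀ k, MeasurableSet (F k)) →
        ∀ (k₀ k₁ : ℕ) (f : M → ℝ), Measurable f → 0 ≤ f → Integrable f μ →
          (∫ x, f x ∂μ) = 1 →
        ∀ ε : ℝ, 0 < ε →
        wassersteinPow p (μ.withDensity fun x => ENNReal.ofReal (f x)) μ < ⊤ →
        ∀ ψ : M → ℝ,
          ψ = (fun x => ∑ k ∈ Finset.Icc k₀ k₁, ⨆ y : M,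
            (if dist x y ^ p ≤ C * ε * (1 + (k : ℝ)) ^ α * a ^ k ∧ y ∈ F k
              then (1 + (k : ℝ)) ^ α * a ^ k else 0)) →
          Measurable ψ → Integrable ψ μ →
        ∫ x, (∑ k ∈ Finset.Icc k₀ k₁,
            (1 + (k : ℝ)) ^ α * a ^ k * Set.indicator (F k) (fun _ => (1 : ℝ)) x) * f x ∂μ ≤
          (1 / ε) * (wassersteinPow p (μ.withDensity fun x => ENNReal.ofReal (f x)) μ).toReal +
            C * ∫ x, ψ x ∂μ :=
  kantorovich_sum_indicator_bound_general a α p ha hα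
end
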